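/- arXiv:2302.14011 — 5 statements merged into one kernel-verified Lean document; each statement's English description precedes it below -/
import Mathlib

section
/- Conditional unbiasedness of the AIPW pseudo-outcome: Let (Ω, 𝓕, μ) be a probability space, W : Ω → 𝒲 measurable, A : Ω → ℝ measurable taking values in {0,1}, and Y : Ω → ℝ bounded measurable. Let π₀ : 𝒲 → ℝ be measurable with μ[A | σ(W)] = π₀∘W almost surely and ε < π₀(W) < 1 − ε almost surely for some ε > 0 (positivity). Let μ₁, μ₀' : 𝒲 → ℝ be bounded measurable functions satisfying μ[A·Y | σ(W)] = (π₀·μ₁)∘W and μ[(1−A)·Y | σ(W)] = ((1−π₀)·μ₀')∘W almost surely. Define the pseudo-outcome χ₀ := (μ₁ − μ₀')∘W + (A − π₀(W)) / (π₀(W)·(1 − π₀(W))) · (Y − A·μ₁(W) − (1−A)·μ₀'(W)). Then μ[χ₀ | σ(W)] = μ₁(W) − μ₀'(W) almost surely. -/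
open MeasureTheory

/-- Integrability from measurability and an a.e. bound, on a finite measure. -/
lemma integrable_of_meas_ae_bound {Ω : Type*} [MeasurableSpace Ω] {μ : Measure Ω}
    [IsFiniteMeasure μ] {f : Ω → ℝ} {C : ℝ} (hf : Measurable f)
    (h : ∀ᵐ ω ∂μ, |f ω| ≤ C) : Integrable f μ :=
  ⟨hf.aestronglyMeasurable, HasFiniteIntegral.of_bounded (C := C) (by
    simpa [Real.norm_eq_abs] using h)⟩

/-- **Conditional unbiasedness of the AIPW pseudo-outcome.**
With `π₀` the propensity score (satisfying positivity) and `μ₁, μ₀'` the outcome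
regressions characterized by the stated conditional moment conditions, the AIPW
pseudo-outcome `χ₀` satisfies `μ[χ₀ | σ(W)] = μ₁(W) − μ₀'(W)` almost surely. -/
theorem aipw_pseudo_outcome_conditionally_unbiased
    {Ω 𝒲 : Type*} [MeasurableSpace Ω] [MeasurableSpace 𝒲]
    (μ : Measure Ω) [IsProbabilityMeasure μ]
    (W : Ω → 𝒲) (hW : Measurable W)
    (A : Ω → ℝ) (hA : Measurable A) (hA01 : ∀ ω, A ω = 0 ∨ A ω = 1)
    (Y : Ω → ℝ) (hY : Measurable Y) (hYbd : ∃ C, ∀ ω, |Y ω| ≤ C)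
    (π₀ : 𝒲 → ℝ) (hπ₀ : Measurable π₀)
    (hπ₀ce : μ[A | MeasurableSpace.comap W inferInstance] =ᵐ[μ] fun ω => π₀ (W ω))
    (ε : ℝ) (hε : 0 < ε)
    (hpos : ∀ᵐ ω ∂μ, ε < π₀ (W ω) ∧ π₀ (W ω) < 1 - ε)
    (μ₁ μ₀' : 𝒲 → ℝ) (hμ₁ : Measurable μ₁) (hμ₀' : Measurable μ₀')
    (hμ₁bd : ∃ C, ∀ w, |μ₁ w| ≤ C) (hμ₀'bd : ∃ C, ∀ w, |μ₀' w| ≤ C)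
    (hμ₁ce : μ[fun ω => A ω * Y ω | MeasurableSpace.comap W inferInstance]
        =ᵐ[μ] fun ω => π₀ (W ω) * μ₁ (W ω))
    (hμ₀ce : μ[fun ω => (1 - A ω) * Y ω | MeasurableSpace.comap W inferInstance]
        =ᵐ[μ] fun ω => (1 - π₀ (W ω)) * μ₀' (W ω))
    (χ₀ : Ω → ℝ)
    (hχ₀ : ∀ ω, χ₀ ω = (μ₁ (W ω) - μ₀' (W ω))
        + (A ω - π₀ (W ω)) / (π₀ (W ω) * (1 - π₀ (W ω)))
            * (Y ω - A ω * μ₁ (W ω) - (1 - A ω) * μ₀' (W ω))) :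
    μ[χ₀ | MeasurableSpace.comap W inferInstance]
      =ᵐ[μ] fun ω => μ₁ (W ω) - μ₀' (W ω) := by
  obtain ⟨Cy, hCy⟩ := hYbd
  obtain ⟨C1, hC1⟩ := hμ₁bd
  obtain ⟨C0, hC0⟩ := hμ₀'bd
  have hm : MeasurableSpace.comap W inferInstance ≤ _ := hW.comap_le
  have hWm : Measurable[MeasurableSpace.comap W inferInstance] W :=
    Measurable.of_comap_le le_rfl
  -- notation
  set F₁ : Ω → ℝ := fun ω => (1 - π₀ (W ω)) / (π₀ (W ω) * (1 - π₀ (W ω))) with hF₁def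
  set F₂ : Ω → ℝ := fun ω => π₀ (W ω) / (π₀ (W ω) * (1 - π₀ (W ω))) with hF₂def
  have hπ₀m : Measurable[MeasurableSpace.comap W inferInstance] fun ω => π₀ (W ω) :=
    hπ₀.comp hWm
  have hF₁m : Measurable[MeasurableSpace.comap W inferInstance] F₁ :=
    (measurable_const.sub hπ₀m).div (hπ₀m.mul (measurable_const.sub hπ₀m))
  have hF₂m : Measurable[MeasurableSpace.comap W inferInstance] F₂ :=
    hπ₀m.div (hπ₀m.mul (measurable_const.sub hπ₀m))
  have hμ₁m : Measurable[MeasurableSpace.comap W inferInstance] fun ω => μ₁ (W ω) :=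
    hμ₁.comp hWm
  have hμ₀m : Measurable[MeasurableSpace.comap W inferInstance] fun ω => μ₀' (W ω) :=
    hμ₀'.comp hWm
  -- a.e. bounds on F₁, F₂
  have hF₁bd : ∀ᵐ ω ∂μ, |F₁ ω| ≤ 1 / ε := by
    filter_upwards [hpos] with ω hω
    obtain ⟨h1, h2⟩ := hω
    have hp : 0 < π₀ (W ω) := hε.trans h1
    have hq : 0 < 1 - π₀ (W ω) := by linarith
    have : F₁ ω = 1 / π₀ (W ω) := by
      simp only [hF₁def]
      field_simp
    rw [this, abs_of_pos (by positivity)]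
    exact one_div_le_one_div_of_le hε h1.le
  have hF₂bd : ∀ᵐ ω ∂μ, |F₂ ω| ≤ 1 / ε := by
    filter_upwards [hpos] with ω hω
    obtain ⟨h1, h2⟩ := hω
    have hp : 0 < π₀ (W ω) := hε.trans h1
    have hq : 0 < 1 - π₀ (W ω) := by linarith
    have : F₂ ω = 1 / (1 - π₀ (W ω)) := by
      simp only [hF₂def]
      field_simp
    rw [this, abs_of_pos (by positivity)]
    exact one_div_le_one_div_of_le hε (by linarith)
  -- bounds on A and on 1 - A
  have hAbd : ∀ ω, |A ω| ≤ 1 := by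
    intro ω; rcases hA01 ω with h | h <;> simp [h]
  have h1Abd : ∀ ω, |1 - A ω| ≤ 1 := by
    intro ω; rcases hA01 ω with h | h <;> simp [h]
  -- the five pieces
  set f₀ : Ω → ℝ := fun ω => μ₁ (W ω) - μ₀' (W ω) with hf₀def
  set G₁ : Ω → ℝ := F₁ * fun ω => A ω * Y ω with hG₁def
  set G₂ : Ω → ℝ := (fun ω => F₁ ω * μ₁ (W ω)) * A with hG₂def
  set G₃ : Ω → ℝ := F₂ * fun ω => (1 - A ω) * Y ω with hG₃def
  set G₄ : Ω → ℝ := (fun ω => F₂ ω * μ₀' (W ω)) * fun ω => 1 - A ω with hG₄def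
  -- pointwise decomposition
  have hdecomp : χ₀ = f₀ + G₁ - G₂ - G₃ + G₄ := by
    funext ω
    simp only [hf₀def, hG₁def, hG₂def, hG₃def, hG₄def, hF₁def, hF₂def,
      Pi.add_apply, Pi.sub_apply, Pi.mul_apply, hχ₀ ω]
    rcases hA01 ω with h | h <;> rw [h] <;> ring
  -- integrability of the pieces
  have intA : Integrable A μ := integrable_of_meas_ae_bound hA (ae_of_all μ hAbd)
  have int1A : Integrable (fun ω => 1 - A ω) μ :=
    integrable_of_meas_ae_bound (measurable_const.sub hA) (ae_of_all μ h1Abd)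
  have intAY : Integrable (fun ω => A ω * Y ω) μ := by
    refine integrable_of_meas_ae_bound (C := 1 * Cy) (hA.mul hY) (ae_of_all μ fun ω => ?_)
    calc |A ω * Y ω| = |A ω| * |Y ω| := abs_mul _ _
      _ ≤ 1 * Cy := mul_le_mul (hAbd ω) (hCy ω) (abs_nonneg _) zero_le_one
  have int1AY : Integrable (fun ω => (1 - A ω) * Y ω) μ := by
    refine integrable_of_meas_ae_bound (C := 1 * Cy) ((measurable_const.sub hA).mul hY)
      (ae_of_all μ fun ω => ?_)
    calc |(1 - A ω) * Y ω| = |1 - A ω| * |Y ω| := abs_mul _ _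
      _ ≤ 1 * Cy := mul_le_mul (h1Abd ω) (hCy ω) (abs_nonneg _) zero_le_one
  have intf₀ : Integrable f₀ μ := by
    refine integrable_of_meas_ae_bound (C := C1 + C0) (Measurable.mono (hμ₁m.sub hμ₀m) hm le_rfl)
      (ae_of_all μ fun ω => ?_)
    calc |μ₁ (W ω) - μ₀' (W ω)| ≤ |μ₁ (W ω)| + |μ₀' (W ω)| := abs_sub _ _
      _ ≤ C1 + C0 := add_le_add (hC1 _) (hC0 _)
  have intG₁ : Integrable G₁ μ :=
    intAY.bdd_mul (Measurable.mono hF₁m hm le_rfl).aestronglyMeasurable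
      (by simpa [Real.norm_eq_abs] using hF₁bd)
  have intG₂ : Integrable G₂ μ := by
    refine intA.bdd_mul (c := (1 / ε) * C1)
      (Measurable.mono (hF₁m.mul hμ₁m) hm le_rfl).aestronglyMeasurable ?_
    filter_upwards [hF₁bd] with ω hω
    calc ‖F₁ ω * μ₁ (W ω)‖ = |F₁ ω| * |μ₁ (W ω)| := abs_mul _ _
      _ ≤ (1 / ε) * C1 := mul_le_mul hω (hC1 _) (abs_nonneg _) (by positivity)
  have intG₃ : Integrable G₃ μ :=
    int1AY.bdd_mul (Measurable.mono hF₂m hm le_rfl).aestronglyMeasurable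
      (by simpa [Real.norm_eq_abs] using hF₂bd)
  have intG₄ : Integrable G₄ μ := by
    refine int1A.bdd_mul (c := (1 / ε) * C0)
      (Measurable.mono (hF₂m.mul hμ₀m) hm le_rfl).aestronglyMeasurable ?_
    filter_upwards [hF₂bd] with ω hω
    calc ‖F₂ ω * μ₀' (W ω)‖ = |F₂ ω| * |μ₀' (W ω)| := abs_mul _ _
      _ ≤ (1 / ε) * C0 := mul_le_mul hω (hC0 _) (abs_nonneg _) (by positivity)
  -- conditional expectations of the pieces
  have e₀ : μ[f₀ | MeasurableSpace.comap W inferInstance] = f₀ :=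
    condExp_of_stronglyMeasurable hm (hμ₁m.sub hμ₀m).stronglyMeasurable intf₀
  have e₁ : μ[G₁ | MeasurableSpace.comap W inferInstance]
      =ᵐ[μ] fun ω => F₁ ω * (π₀ (W ω) * μ₁ (W ω)) := by
    refine (condExp_mul_of_stronglyMeasurable_left hF₁m.stronglyMeasurable intG₁ intAY).trans ?_
    exact Filter.EventuallyEq.mul (Filter.EventuallyEq.refl _ F₁) hμ₁ce
  have e₂ : μ[G₂ | MeasurableSpace.comap W inferInstance]
      =ᵐ[μ] fun ω => F₁ ω * μ₁ (W ω) * π₀ (W ω) := by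
    refine (condExp_mul_of_stronglyMeasurable_left (hF₁m.mul hμ₁m).stronglyMeasurable
      intG₂ intA).trans ?_
    exact Filter.EventuallyEq.mul (Filter.EventuallyEq.refl _ _) hπ₀ce
  have e₃ : μ[G₃ | MeasurableSpace.comap W inferInstance]
      =ᵐ[μ] fun ω => F₂ ω * ((1 - π₀ (W ω)) * μ₀' (W ω)) := by
    refine (condExp_mul_of_stronglyMeasurable_left hF₂m.stronglyMeasurable intG₃ int1AY).trans ?_
    exact Filter.EventuallyEq.mul (Filter.EventuallyEq.refl _ F₂) hμ₀ce
  have h1A : μ[fun ω => 1 - A ω | MeasurableSpace.comap W inferInstance]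
      =ᵐ[μ] fun ω => 1 - π₀ (W ω) := by
    have h := condExp_sub (μ := μ) (m := MeasurableSpace.comap W inferInstance)
      (integrable_const (1 : ℝ)) intA
    have hc : μ[fun _ : Ω => (1 : ℝ) | MeasurableSpace.comap W inferInstance]
        = fun _ => (1 : ℝ) := condExp_const hm 1
    refine Filter.EventuallyEq.trans ?_ ((Filter.EventuallyEq.refl _ _).sub hπ₀ce)
    rw [hc] at h
    exact h
  have e₄ : μ[G₄ | MeasurableSpace.comap W inferInstance]
      =ᵐ[μ] fun ω => F₂ ω * μ₀' (W ω) * (1 - π₀ (W ω)) := by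
    refine (condExp_mul_of_stronglyMeasurable_left (hF₂m.mul hμ₀m).stronglyMeasurable
      intG₄ int1A).trans ?_
    exact Filter.EventuallyEq.mul (Filter.EventuallyEq.refl _ _) h1A
  -- linearity
  have step : μ[f₀ + G₁ - G₂ - G₃ + G₄ | MeasurableSpace.comap W inferInstance]
      =ᵐ[μ] μ[f₀ | MeasurableSpace.comap W inferInstance]
        + μ[G₁ | MeasurableSpace.comap W inferInstance]
        - μ[G₂ | MeasurableSpace.comap W inferInstance]
        - μ[G₃ | MeasurableSpace.comap W inferInstance]
        + μ[G₄ | MeasurableSpace.comap W inferInstance] := by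
    have h4 := condExp_add (μ := μ) (m := MeasurableSpace.comap W inferInstance)
      intf₀ intG₁
    have h3 := condExp_sub (μ := μ) (m := MeasurableSpace.comap W inferInstance)
      (intf₀.add intG₁) intG₂
    have h2 := condExp_sub (μ := μ) (m := MeasurableSpace.comap W inferInstance)
      ((intf₀.add intG₁).sub intG₂) intG₃
    have h1 := condExp_add (μ := μ) (m := MeasurableSpace.comap W inferInstance)
      (((intf₀.add intG₁).sub intG₂).sub intG₃) intG₄
    exact h1.trans (((h2.trans ((h3.trans (h4.sub (Filter.EventuallyEq.refl _ _))).sub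
      (Filter.EventuallyEq.refl _ _))).add (Filter.EventuallyEq.refl _ _)))
  rw [hdecomp]
  refine step.trans ?_
  rw [e₀]
  filter_upwards [e₁, e₂, e₃, e₄] with ω h1 h2 h3 h4
  simp only [Pi.add_apply, Pi.sub_apply, h1, h2, h3, h4, hf₀def]
  ring
end

section
/- Doubly-robust L² bias bound for the estimated pseudo-outcome: Under the setup of the doubly-robust remainder identity (true propensity score π₀ with μ[A | σ(W)] = π₀∘W, true outcome regressions μ₁, μ₀' characterized by the conditional moment conditions, estimates πₘ, μₘ₁, μₘ₀ with η < πₘ < 1 − η for some η > 0, and estimated pseudo-outcome χₘ), the L²(μ) norm of the conditional bias satisfies ‖μ[χₘ | σ(W)] − (μ₁ − μ₀')∘W‖_{L²(μ)} ≤ (1/η)·( ‖((πₘ − π₀)·(μ₁ − μₘ₁))∘W‖_{L²(μ)} + ‖((πₘ − π₀)·(μ₀' − μₘ₀))∘W‖_{L²(μ)} ). -/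
open MeasureTheory

private lemma bdd_integrable {Ω : Type*} [MeasurableSpace Ω] (μ : Measure Ω)
    [IsProbabilityMeasure μ] {f : Ω → ℝ} (hf : Measurable f) (C : ℝ)
    (hC : ∀ ω, |f ω| ≤ C) : Integrable f μ :=
  ⟨hf.aestronglyMeasurable, HasFiniteIntegral.of_bounded (C := C)
    (Filter.Eventually.of_forall fun ω => by simpa [Real.norm_eq_abs] using hC ω)⟩

private lemma abs_div_le' {x d η : ℝ} (hη : 0 < η) (hd : η ≤ d) : |x / d| ≤ |x| / η := by
  rw [abs_div, abs_of_pos (lt_of_lt_of_le hη hd)]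
  gcongr

private def mc {Ω 𝒲 : Type*} [MeasurableSpace 𝒲] (W : Ω → 𝒲) : MeasurableSpace Ω :=
  MeasurableSpace.comap W inferInstance

/-- **Doubly-robust L² bias bound for the estimated pseudo-outcome.**
Under the setup of the doubly-robust remainder identity, the `L²(μ)` norm of the
conditional bias of the estimated pseudo-outcome `χₘ` is bounded by
`(1/η)·(‖(πₘ−π₀)(μ₁−μₘ₁)∘W‖₂ + ‖(πₘ−π₀)(μ₀'−μₘ₀)∘W‖₂)`. -/
theorem doubly_robust_L2_bias_bound
    {Ω 𝒲 : Type*} [MeasurableSpace Ω] [MeasurableSpace 𝒲]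
    (μ : Measure Ω) [IsProbabilityMeasure μ]
    (W : Ω → 𝒲) (hW : Measurable W)
    (A : Ω → ℝ) (hA : Measurable A) (hA01 : ∀ ω, A ω = 0 ∨ A ω = 1)
    (Y : Ω → ℝ) (hY : Measurable Y) (hYbd : ∃ C, ∀ ω, |Y ω| ≤ C)
    (π₀ : 𝒲 → ℝ) (hπ₀ : Measurable π₀)
    (hπ₀ce : μ[A | MeasurableSpace.comap W inferInstance] =ᵐ[μ] fun ω => π₀ (W ω))
    (μ₁ μ₀' : 𝒲 → ℝ) (hμ₁ : Measurable μ₁) (hμ₀' : Measurable μ₀')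
    (hμ₁bd : ∃ C, ∀ w, |μ₁ w| ≤ C) (hμ₀'bd : ∃ C, ∀ w, |μ₀' w| ≤ C)
    (hμ₁ce : μ[fun ω => A ω * Y ω | MeasurableSpace.comap W inferInstance]
        =ᵐ[μ] fun ω => π₀ (W ω) * μ₁ (W ω))
    (hμ₀ce : μ[fun ω => (1 - A ω) * Y ω | MeasurableSpace.comap W inferInstance]
        =ᵐ[μ] fun ω => (1 - π₀ (W ω)) * μ₀' (W ω))
    (πₘ μₘ₁ μₘ₀ : 𝒲 → ℝ) (hπₘ : Measurable πₘ)
    (hμₘ₁ : Measurable μₘ₁) (hμₘ₀ : Measurable μₘ₀)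
    (hμₘ₁bd : ∃ C, ∀ w, |μₘ₁ w| ≤ C) (hμₘ₀bd : ∃ C, ∀ w, |μₘ₀ w| ≤ C)
    (η : ℝ) (hη : 0 < η) (hπₘbd : ∀ w, η < πₘ w ∧ πₘ w < 1 - η)
    (χₘ : Ω → ℝ)
    (hχₘ : ∀ ω, χₘ ω = (μₘ₁ (W ω) - μₘ₀ (W ω))
        + (A ω - πₘ (W ω)) / (πₘ (W ω) * (1 - πₘ (W ω)))
            * (Y ω - A ω * μₘ₁ (W ω) - (1 - A ω) * μₘ₀ (W ω))) :
    eLpNorm (fun ω => (μ[χₘ | MeasurableSpace.comap W inferInstance]) ω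
        - (μ₁ (W ω) - μ₀' (W ω))) 2 μ
      ≤ ENNReal.ofReal (1 / η)
          * (eLpNorm (fun ω => (πₘ (W ω) - π₀ (W ω)) * (μ₁ (W ω) - μₘ₁ (W ω))) 2 μ
              + eLpNorm (fun ω => (πₘ (W ω) - π₀ (W ω)) * (μ₀' (W ω) - μₘ₀ (W ω))) 2 μ) := by
  have hm : mc W ≤ ‹MeasurableSpace Ω› := hW.comap_le
  have hWm : Measurable[mc W] W := Measurable.of_comap_le le_rfl
  -- positivity facts
  have hπpos : ∀ w, 0 < πₘ w := fun w => hη.trans (hπₘbd w).1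
  have h1πpos : ∀ w, 0 < 1 - πₘ w := fun w => hη.trans (by linarith [(hπₘbd w).2])
  have hπne : ∀ w, πₘ w ≠ 0 := fun w => ne_of_gt (hπpos w)
  have h1πne : ∀ w, 1 - πₘ w ≠ 0 := fun w => ne_of_gt (h1πpos w)
  have hηπ : ∀ w, η ≤ πₘ w := fun w => le_of_lt (hπₘbd w).1
  have hη1π : ∀ w, η ≤ 1 - πₘ w := fun w => by linarith [(hπₘbd w).2]
  -- nonneg bounds
  obtain ⟨CY₀, hCY₀⟩ := hYbd
  obtain ⟨D1₀, hD1₀⟩ := hμₘ₁bd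
  obtain ⟨D0₀, hD0₀⟩ := hμₘ₀bd
  set CY := max CY₀ 0 with hCYdef
  set D1 := max D1₀ 0 with hD1def
  set D0 := max D0₀ 0 with hD0def
  have hCY : ∀ ω, |Y ω| ≤ CY := fun ω => (hCY₀ ω).trans (le_max_left _ _)
  have hD1 : ∀ w, |μₘ₁ w| ≤ D1 := fun w => (hD1₀ w).trans (le_max_left _ _)
  have hD0 : ∀ w, |μₘ₀ w| ≤ D0 := fun w => (hD0₀ w).trans (le_max_left _ _)
  have hCYpos : 0 ≤ CY := le_max_right _ _
  have hD1pos : 0 ≤ D1 := le_max_right _ _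
  have hD0pos : 0 ≤ D0 := le_max_right _ _
  have hAabs : ∀ ω, |A ω| ≤ 1 := by
    intro ω; rcases hA01 ω with h | h <;> simp [h]
  have h1Aabs : ∀ ω, |1 - A ω| ≤ 1 := by
    intro ω; rcases hA01 ω with h | h <;> simp [h]
  -- the four pieces
  set g₀ : 𝒲 → ℝ := fun w => μₘ₁ w - μₘ₀ w + μₘ₀ w / (1 - πₘ w) with hg₀def
  set g₁ : 𝒲 → ℝ := fun w => 1 / πₘ w with hg₁def
  set g₂ : 𝒲 → ℝ := fun w => -(μₘ₁ w / πₘ w) - μₘ₀ w / (1 - πₘ w) with hg₂def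
  set g₃ : 𝒲 → ℝ := fun w => -(1 / (1 - πₘ w)) with hg₃def
  have hg₀m : Measurable g₀ := (hμₘ₁.sub hμₘ₀).add (hμₘ₀.div (hπₘ.const_sub 1))
  have hg₁m : Measurable g₁ := measurable_const.div hπₘ
  have hg₂m : Measurable g₂ := ((hμₘ₁.div hπₘ).neg).sub (hμₘ₀.div (hπₘ.const_sub 1))
  have hg₃m : Measurable g₃ := (measurable_const.div (hπₘ.const_sub 1)).neg
  -- bounds for the pieces
  have hg₀bd : ∀ w, |g₀ w| ≤ D1 + D0 + D0 / η := by
    intro w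
    rw [hg₀def]
    calc |μₘ₁ w - μₘ₀ w + μₘ₀ w / (1 - πₘ w)|
        ≤ |μₘ₁ w - μₘ₀ w| + |μₘ₀ w / (1 - πₘ w)| := abs_add_le _ _
      _ ≤ (|μₘ₁ w| + |μₘ₀ w|) + |μₘ₀ w| / η :=
          add_le_add (abs_sub _ _) (abs_div_le' hη (hη1π w))
      _ ≤ D1 + D0 + D0 / η := by
          have h1 := hD1 w; have h0 := hD0 w
          have h2 : |μₘ₀ w| / η ≤ D0 / η := by gcongr
          linarith
  have hg₁bd : ∀ w, |g₁ w| ≤ 1 / η := by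
    intro w
    rw [hg₁def]
    calc |1 / πₘ w| ≤ |(1 : ℝ)| / η := abs_div_le' hη (hηπ w)
      _ = 1 / η := by rw [abs_one]
  have hg₂bd : ∀ w, |g₂ w| ≤ D1 / η + D0 / η := by
    intro w
    rw [hg₂def]
    calc |(-(μₘ₁ w / πₘ w)) - μₘ₀ w / (1 - πₘ w)|
        ≤ |(-(μₘ₁ w / πₘ w))| + |μₘ₀ w / (1 - πₘ w)| := abs_sub _ _
      _ = |μₘ₁ w / πₘ w| + |μₘ₀ w / (1 - πₘ w)| := by rw [abs_neg]
      _ ≤ |μₘ₁ w| / η + |μₘ₀ w| / η :=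
          add_le_add (abs_div_le' hη (hηπ w)) (abs_div_le' hη (hη1π w))
      _ ≤ D1 / η + D0 / η := by
          have h1 := hD1 w; have h0 := hD0 w
          gcongr
  have hg₃bd : ∀ w, |g₃ w| ≤ 1 / η := by
    intro w
    rw [hg₃def]
    calc |(-(1 / (1 - πₘ w)))| = |1 / (1 - πₘ w)| := abs_neg _
      _ ≤ |(1 : ℝ)| / η := abs_div_le' hη (hη1π w)
      _ = 1 / η := by rw [abs_one]
  -- pointwise decomposition of χₘ
  have hdecomp : χₘ = (((fun ω => g₀ (W ω)) + fun ω => g₁ (W ω) * (A ω * Y ω))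
      + fun ω => g₂ (W ω) * A ω) + fun ω => g₃ (W ω) * ((1 - A ω) * Y ω) := by
    funext ω
    show χₘ ω = g₀ (W ω) + g₁ (W ω) * (A ω * Y ω) + g₂ (W ω) * A ω
        + g₃ (W ω) * ((1 - A ω) * Y ω)
    rw [hχₘ, hg₀def, hg₁def, hg₂def, hg₃def]
    have h1 := hπne (W ω); have h2 := h1πne (W ω)
    rcases hA01 ω with h | h <;> simp only [h] <;> field_simp <;> ring
  -- integrability of the pieces
  have hI₀ : Integrable (fun ω => g₀ (W ω)) μ :=
    bdd_integrable μ (hg₀m.comp hW) _ (fun ω => hg₀bd (W ω))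
  have hIAY : Integrable (fun ω => A ω * Y ω) μ :=
    bdd_integrable μ (hA.mul hY) CY (fun ω => by
      rw [abs_mul]
      calc |A ω| * |Y ω| ≤ 1 * CY :=
        mul_le_mul (hAabs ω) (hCY ω) (abs_nonneg _) zero_le_one
      _ = CY := one_mul _)
  have hIA : Integrable A μ := bdd_integrable μ hA 1 hAabs
  have hI1AY : Integrable (fun ω => (1 - A ω) * Y ω) μ :=
    bdd_integrable μ ((hA.const_sub 1).mul hY) CY (fun ω => by
      rw [abs_mul]
      calc |1 - A ω| * |Y ω| ≤ 1 * CY :=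
        mul_le_mul (h1Aabs ω) (hCY ω) (abs_nonneg _) zero_le_one
      _ = CY := one_mul _)
  have hI₁ : Integrable (fun ω => g₁ (W ω) * (A ω * Y ω)) μ :=
    bdd_integrable μ ((hg₁m.comp hW).mul (hA.mul hY)) ((1 / η) * CY) (fun ω => by
      rw [abs_mul, abs_mul]
      exact mul_le_mul (hg₁bd (W ω))
        (by calc |A ω| * |Y ω| ≤ 1 * CY :=
              mul_le_mul (hAabs ω) (hCY ω) (abs_nonneg _) zero_le_one
            _ = CY := one_mul _)
        (by positivity) (by positivity))
  have hI₂ : Integrable (fun ω => g₂ (W ω) * A ω) μ :=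
    bdd_integrable μ ((hg₂m.comp hW).mul hA) (D1 / η + D0 / η) (fun ω => by
      rw [abs_mul]
      calc |g₂ (W ω)| * |A ω| ≤ (D1 / η + D0 / η) * 1 :=
        mul_le_mul (hg₂bd (W ω)) (hAabs ω) (abs_nonneg _) (by positivity)
      _ = _ := mul_one _)
  have hI₃ : Integrable (fun ω => g₃ (W ω) * ((1 - A ω) * Y ω)) μ :=
    bdd_integrable μ ((hg₃m.comp hW).mul ((hA.const_sub 1).mul hY)) ((1 / η) * CY) (fun ω => by
      rw [abs_mul, abs_mul]
      exact mul_le_mul (hg₃bd (W ω))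
        (by calc |1 - A ω| * |Y ω| ≤ 1 * CY :=
              mul_le_mul (h1Aabs ω) (hCY ω) (abs_nonneg _) zero_le_one
            _ = CY := one_mul _)
        (by positivity) (by positivity))
  -- conditional expectation computation
  haveI : IsFiniteMeasure (μ.trim hm) := isFiniteMeasure_trim hm
  have hce₀ : μ[(fun ω => g₀ (W ω)) | mc W] = fun ω => g₀ (W ω) :=
    condExp_of_stronglyMeasurable hm
      (Measurable.stronglyMeasurable (hg₀m.comp hWm)) hI₀
  have hce₁ : μ[(fun ω => g₁ (W ω) * (A ω * Y ω)) | mc W]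
      =ᵐ[μ] fun ω => g₁ (W ω) * (π₀ (W ω) * μ₁ (W ω)) := by
    have h := condExp_mul_of_stronglyMeasurable_left (μ := μ)
      (Measurable.stronglyMeasurable (hg₁m.comp hWm) : StronglyMeasurable[mc W] fun ω => g₁ (W ω))
      (g := fun ω => A ω * Y ω) hI₁ hIAY
    exact h.trans (Filter.EventuallyEq.mul Filter.EventuallyEq.rfl hμ₁ce)
  have hce₂ : μ[(fun ω => g₂ (W ω) * A ω) | mc W] =ᵐ[μ] fun ω => g₂ (W ω) * π₀ (W ω) := by
    have h := condExp_mul_of_stronglyMeasurable_left (μ := μ)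
      (Measurable.stronglyMeasurable (hg₂m.comp hWm) : StronglyMeasurable[mc W] fun ω => g₂ (W ω))
      (g := A) hI₂ hIA
    exact h.trans (Filter.EventuallyEq.mul Filter.EventuallyEq.rfl hπ₀ce)
  have hce₃ : μ[(fun ω => g₃ (W ω) * ((1 - A ω) * Y ω)) | mc W]
      =ᵐ[μ] fun ω => g₃ (W ω) * ((1 - π₀ (W ω)) * μ₀' (W ω)) := by
    have h := condExp_mul_of_stronglyMeasurable_left (μ := μ)
      (Measurable.stronglyMeasurable (hg₃m.comp hWm) : StronglyMeasurable[mc W] fun ω => g₃ (W ω))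
      (g := fun ω => (1 - A ω) * Y ω) hI₃ hI1AY
    exact h.trans (Filter.EventuallyEq.mul Filter.EventuallyEq.rfl hμ₀ce)
  have hce : μ[χₘ | mc W] =ᵐ[μ] fun ω => g₀ (W ω) + g₁ (W ω) * (π₀ (W ω) * μ₁ (W ω))
      + g₂ (W ω) * π₀ (W ω) + g₃ (W ω) * ((1 - π₀ (W ω)) * μ₀' (W ω)) := by
    rw [hdecomp]
    calc μ[(((fun ω => g₀ (W ω)) + fun ω => g₁ (W ω) * (A ω * Y ω))
          + fun ω => g₂ (W ω) * A ω) + (fun ω => g₃ (W ω) * ((1 - A ω) * Y ω)) | mc W]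
        =ᵐ[μ] μ[((fun ω => g₀ (W ω)) + fun ω => g₁ (W ω) * (A ω * Y ω))
            + fun ω => g₂ (W ω) * A ω | mc W]
          + μ[(fun ω => g₃ (W ω) * ((1 - A ω) * Y ω)) | mc W] :=
          condExp_add ((hI₀.add hI₁).add hI₂) hI₃ _
      _ =ᵐ[μ] (μ[(fun ω => g₀ (W ω)) + fun ω => g₁ (W ω) * (A ω * Y ω) | mc W]
            + μ[(fun ω => g₂ (W ω) * A ω) | mc W])
          + μ[(fun ω => g₃ (W ω) * ((1 - A ω) * Y ω)) | mc W] :=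
          Filter.EventuallyEq.add (condExp_add (hI₀.add hI₁) hI₂ _) Filter.EventuallyEq.rfl
      _ =ᵐ[μ] ((μ[(fun ω => g₀ (W ω)) | mc W] + μ[(fun ω => g₁ (W ω) * (A ω * Y ω)) | mc W])
            + μ[(fun ω => g₂ (W ω) * A ω) | mc W])
          + μ[(fun ω => g₃ (W ω) * ((1 - A ω) * Y ω)) | mc W] :=
          Filter.EventuallyEq.add
            (Filter.EventuallyEq.add (condExp_add hI₀ hI₁ _) Filter.EventuallyEq.rfl)
            Filter.EventuallyEq.rfl
      _ =ᵐ[μ] fun ω => g₀ (W ω) + g₁ (W ω) * (π₀ (W ω) * μ₁ (W ω))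
            + g₂ (W ω) * π₀ (W ω) + g₃ (W ω) * ((1 - π₀ (W ω)) * μ₀' (W ω)) := by
          rw [hce₀]
          exact Filter.EventuallyEq.add
            (Filter.EventuallyEq.add
              (Filter.EventuallyEq.add Filter.EventuallyEq.rfl hce₁) hce₂) hce₃
  -- the doubly-robust remainder identity, pointwise on 𝒲
  have hkey : ∀ w, g₀ w + g₁ w * (π₀ w * μ₁ w) + g₂ w * π₀ w
      + g₃ w * ((1 - π₀ w) * μ₀' w) - (μ₁ w - μ₀' w)
      = -((πₘ w - π₀ w) * (μ₁ w - μₘ₁ w) / πₘ w)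
        - (πₘ w - π₀ w) * (μ₀' w - μₘ₀ w) / (1 - πₘ w) := by
    intro w
    rw [hg₀def, hg₁def, hg₂def, hg₃def]
    have h1 := hπne w; have h2 := h1πne w
    field_simp
    ring
  -- pointwise bound on the bias
  have hbd : ∀ w, |g₀ w + g₁ w * (π₀ w * μ₁ w) + g₂ w * π₀ w
      + g₃ w * ((1 - π₀ w) * μ₀' w) - (μ₁ w - μ₀' w)|
      ≤ (1 / η) * (|(πₘ w - π₀ w) * (μ₁ w - μₘ₁ w)| + |(πₘ w - π₀ w) * (μ₀' w - μₘ₀ w)|) := by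
    intro w
    rw [hkey w]
    have h1 : |(πₘ w - π₀ w) * (μ₁ w - μₘ₁ w) / πₘ w|
        ≤ |(πₘ w - π₀ w) * (μ₁ w - μₘ₁ w)| / η := abs_div_le' hη (hηπ w)
    have h2 : |(πₘ w - π₀ w) * (μ₀' w - μₘ₀ w) / (1 - πₘ w)|
        ≤ |(πₘ w - π₀ w) * (μ₀' w - μₘ₀ w)| / η := abs_div_le' hη (hη1π w)
    calc |-((πₘ w - π₀ w) * (μ₁ w - μₘ₁ w) / πₘ w)
          - (πₘ w - π₀ w) * (μ₀' w - μₘ₀ w) / (1 - πₘ w)|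
        ≤ |(-((πₘ w - π₀ w) * (μ₁ w - μₘ₁ w) / πₘ w))|
          + |(πₘ w - π₀ w) * (μ₀' w - μₘ₀ w) / (1 - πₘ w)| := abs_sub _ _
      _ = |(πₘ w - π₀ w) * (μ₁ w - μₘ₁ w) / πₘ w|
          + |(πₘ w - π₀ w) * (μ₀' w - μₘ₀ w) / (1 - πₘ w)| := by rw [abs_neg]
      _ ≤ |(πₘ w - π₀ w) * (μ₁ w - μₘ₁ w)| / η
          + |(πₘ w - π₀ w) * (μ₀' w - μₘ₀ w)| / η := add_le_add h1 h2
      _ = (1 / η) * (|(πₘ w - π₀ w) * (μ₁ w - μₘ₁ w)|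
          + |(πₘ w - π₀ w) * (μ₀' w - μₘ₀ w)|) := by ring
  -- assemble the L² estimate
  set F : Ω → ℝ := fun ω => (πₘ (W ω) - π₀ (W ω)) * (μ₁ (W ω) - μₘ₁ (W ω)) with hFdef
  set G : Ω → ℝ := fun ω => (πₘ (W ω) - π₀ (W ω)) * (μ₀' (W ω) - μₘ₀ (W ω)) with hGdef
  have hFm : Measurable F := ((hπₘ.sub hπ₀).mul (hμ₁.sub hμₘ₁)).comp hW
  have hGm : Measurable G := ((hπₘ.sub hπ₀).mul (hμ₀'.sub hμₘ₀)).comp hW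
  have heq : (fun ω => (μ[χₘ | mc W]) ω - (μ₁ (W ω) - μ₀' (W ω)))
      =ᵐ[μ] fun ω => g₀ (W ω) + g₁ (W ω) * (π₀ (W ω) * μ₁ (W ω))
        + g₂ (W ω) * π₀ (W ω) + g₃ (W ω) * ((1 - π₀ (W ω)) * μ₀' (W ω))
        - (μ₁ (W ω) - μ₀' (W ω)) := by
    filter_upwards [hce] with ω hω
    rw [hω]
  calc eLpNorm (fun ω => (μ[χₘ | mc W]) ω - (μ₁ (W ω) - μ₀' (W ω))) 2 μ
      = eLpNorm (fun ω => g₀ (W ω) + g₁ (W ω) * (π₀ (W ω) * μ₁ (W ω))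
          + g₂ (W ω) * π₀ (W ω) + g₃ (W ω) * ((1 - π₀ (W ω)) * μ₀' (W ω))
          - (μ₁ (W ω) - μ₀' (W ω))) 2 μ := eLpNorm_congr_ae heq
    _ ≤ eLpNorm (fun ω => (1 / η) * (|F ω| + |G ω|)) 2 μ := by
        refine eLpNorm_mono fun ω => ?_
        rw [Real.norm_eq_abs, Real.norm_eq_abs]
        exact (hbd (W ω)).trans (le_abs_self _)
    _ = (‖(1 / η : ℝ)‖₊ : ENNReal) * eLpNorm (fun ω => |F ω| + |G ω|) 2 μ :=
        eLpNorm_const_smul (1 / η : ℝ) (fun ω => |F ω| + |G ω|) 2 μ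
    _ = ENNReal.ofReal (1 / η) * eLpNorm (fun ω => |F ω| + |G ω|) 2 μ := by
        exact congrArg (· * _) (Real.enorm_eq_ofReal (le_of_lt (one_div_pos.mpr hη)))
    _ ≤ ENNReal.ofReal (1 / η) * (eLpNorm (fun ω => |F ω|) 2 μ + eLpNorm (fun ω => |G ω|) 2 μ) :=
        mul_le_mul_right
          (eLpNorm_add_le (hFm.abs.aestronglyMeasurable) (hGm.abs.aestronglyMeasurable)
            one_le_two) _
    _ = ENNReal.ofReal (1 / η) * (eLpNorm F 2 μ + eLpNorm G 2 μ) := by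
        simp_rw [← Real.norm_eq_abs]
        rw [eLpNorm_norm, eLpNorm_norm]
end

section
/- Lemma 1 (score equations of causal isotonic calibration): Let n ≥ 1, let x₁,…,xₙ ∈ ℝ and y₁,…,yₙ ∈ ℝ, and let θ* : ℝ → ℝ be of the form θ*(x) = a₀ + Σ_{j=1}^{J} aⱼ·1(x ≥ uⱼ) with a₀ ∈ ℝ, a₁,…,a_J > 0, and u₁ < u₂ < … < u_J. Suppose that for every monotone nondecreasing θ : ℝ → ℝ, Σ_{i=1}^{n} (yᵢ − θ*(xᵢ))² ≤ Σ_{i=1}^{n} (yᵢ − θ(xᵢ))². Then for every function r : ℝ → ℝ, Σ_{i=1}^{n} r(θ*(xᵢ))·(θ*(xᵢ) − yᵢ) = 0. -/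
/-- Auxiliary: a one-sided quadratic domination near `0` on both sides forces `B = 0`. -/
private lemma quad_zero (N B δ : ℝ) (hδ : 0 < δ) (hN : 0 ≤ N)
    (h : ∀ c : ℝ, -δ ≤ c → 2 * c * B ≤ c ^ 2 * N) : B = 0 := by
  by_contra hB
  have hB' : 0 < |B| := abs_pos.mpr hB
  set t : ℝ := min δ (|B| / (N + 1)) with ht
  have ht0 : 0 < t := lt_min hδ (by positivity)
  have htδ : t ≤ δ := min_le_left _ _
  have h1 := h t (by linarith)
  have h2 := h (-t) (by linarith)
  have habs : 2 * t * |B| ≤ t ^ 2 * N := by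
    rcases abs_cases B with ⟨hb, _⟩ | ⟨hb, _⟩ <;> nlinarith
  have htle : t ≤ |B| / (N + 1) := min_le_right _ _
  have h3 : t * (N + 1) ≤ |B| := (le_div_iff₀ (by positivity)).mp htle
  nlinarith [mul_le_mul_of_nonneg_left h3 ht0.le]

/-- Auxiliary: a downward-closed subset of `Fin J` is an initial segment. -/
private lemma mem_iff_lt_card {J : ℕ} (S : Finset (Fin J))
    (hS : ∀ ⦃j j' : Fin J⦄, j ≤ j' → j' ∈ S → j ∈ S) (j : Fin J) :
    j ∈ S ↔ (j : ℕ) < S.card := by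
  constructor
  · intro hj
    have hsub : Finset.Iic j ⊆ S := fun j' hj' => hS (Finset.mem_Iic.mp hj') hj
    have hle := Finset.card_le_card hsub
    have hcard : (Finset.Iic j).card = (j : ℕ) + 1 := Fin.card_Iic j
    omega
  · intro hj
    by_contra hjS
    have hsub : S ⊆ Finset.Iio j := by
      intro j' hj'
      rw [Finset.mem_Iio]
      by_contra hcon
      exact hjS (hS (not_lt.mp hcon) hj')
    have hle := Finset.card_le_card hsub
    have hcard : (Finset.Iio j).card = (j : ℕ) := Fin.card_Iio j
    omega

private lemma indicator_mono (c : ℝ) :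
    Monotone (fun t : ℝ => if c ≤ t then (1 : ℝ) else 0) := by
  intro t t' h
  by_cases h1 : c ≤ t
  · simp [h1, le_trans h1 h]
  · by_cases h2 : c ≤ t' <;> simp [h1, h2]

/-- **Lemma 1 (score equations of causal isotonic calibration).**
If `θ*` is a piecewise-constant nondecreasing function with jump representation
`θ*(x) = a₀ + Σⱼ aⱼ·1(x ≥ uⱼ)` (with `aⱼ > 0` and `u₁ < … < u_J`) minimizing the
least-squares criterion over all monotone nondecreasing functions, then for every
`r : ℝ → ℝ` we have `Σᵢ r(θ*(xᵢ))·(θ*(xᵢ) − yᵢ) = 0`. -/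
theorem isotonic_calibration_score_equations
    (n J : ℕ) (hn : 1 ≤ n) (x y : Fin n → ℝ)
    (θs : ℝ → ℝ) (a₀ : ℝ) (a u : Fin J → ℝ)
    (ha : ∀ j, 0 < a j) (hu : StrictMono u)
    (hform : ∀ t, θs t = a₀ + ∑ j, a j * (if u j ≤ t then (1 : ℝ) else 0))
    (hmin : ∀ θ : ℝ → ℝ, Monotone θ →
      ∑ i, (y i - θs (x i)) ^ 2 ≤ ∑ i, (y i - θ (x i)) ^ 2) :
    ∀ r : ℝ → ℝ, ∑ i, r (θs (x i)) * (θs (x i) - y i) = 0 := by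
  intro r
  -- θs is monotone
  have hθmono : Monotone θs := by
    have : θs = fun t => a₀ + ∑ j, a j * (if u j ≤ t then (1 : ℝ) else 0) := funext hform
    rw [this]
    intro t t' h
    apply add_le_add le_rfl
    apply Finset.sum_le_sum
    intro j _
    exact mul_le_mul_of_nonneg_left (indicator_mono (u j) h) (ha j).le
  -- Step A: total residual sum is zero
  have hstepA : ∑ i, (θs (x i) - y i) = 0 := by
    have key : ∀ c : ℝ, -(1 : ℝ) ≤ c →
        2 * c * (∑ i, (y i - θs (x i))) ≤ c ^ 2 * (n : ℝ) := by
      intro c _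
      have hmono : Monotone (fun t => θs t + c) := hθmono.add_const c
      have hineq := hmin _ hmono
      have expand : ∑ i, (y i - (θs (x i) + c)) ^ 2
          = ∑ i, (y i - θs (x i)) ^ 2 - 2 * c * (∑ i, (y i - θs (x i))) + c ^ 2 * (n : ℝ) := by
        have : ∀ i : Fin n, (y i - (θs (x i) + c)) ^ 2
            = ((y i - θs (x i)) ^ 2 - 2 * c * (y i - θs (x i)) + c ^ 2) := by
          intro i; ring
        rw [Finset.sum_congr rfl (fun i _ => this i), Finset.sum_add_distrib,
          Finset.sum_sub_distrib, ← Finset.mul_sum, Finset.sum_const, Finset.card_univ,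
          Fintype.card_fin, nsmul_eq_mul]
        ring
      linarith
    have hB0 := quad_zero (n : ℝ) (∑ i, (y i - θs (x i))) 1 one_pos (by positivity) key
    have hneg : ∑ i, (θs (x i) - y i) = -(∑ i, (y i - θs (x i))) := by
      rw [← Finset.sum_neg_distrib]
      exact Finset.sum_congr rfl (fun i _ => by ring)
    rw [hneg, hB0, neg_zero]
  -- Step B: the residual sum above each jump point is zero
  have hstepB : ∀ j : Fin J,
      ∑ i, (if u j ≤ x i then (1 : ℝ) else 0) * (θs (x i) - y i) = 0 := by
    intro j
    set B := ∑ i, (if u j ≤ x i then (1 : ℝ) else 0) * (y i - θs (x i)) with hB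
    set N := ∑ i, (if u j ≤ x i then (1 : ℝ) else 0) with hN
    have hN0 : 0 ≤ N := Finset.sum_nonneg (fun i _ => by positivity)
    have key : ∀ c : ℝ, -(a j) ≤ c → 2 * c * B ≤ c ^ 2 * N := by
      intro c hc
      set θc : ℝ → ℝ := fun t => a₀ +
        ∑ j', (if j' = j then a j + c else a j') * (if u j' ≤ t then (1 : ℝ) else 0) with hθc
      have hθcmono : Monotone θc := by
        intro t t' h
        apply add_le_add le_rfl
        apply Finset.sum_le_sum
        intro j' _
        apply mul_le_mul_of_nonneg_left (indicator_mono (u j') h)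
        split_ifs with hj
        · linarith
        · exact (ha j').le
      have hθcval : ∀ t, θc t = θs t + c * (if u j ≤ t then (1 : ℝ) else 0) := by
        intro t
        rw [hform]
        have hterm : ∀ j' : Fin J,
            (if j' = j then a j + c else a j') * (if u j' ≤ t then (1 : ℝ) else 0)
            = a j' * (if u j' ≤ t then (1 : ℝ) else 0) +
              (if j' = j then c * (if u j ≤ t then (1 : ℝ) else 0) else 0) := by
          intro j'
          rcases eq_or_ne j' j with hj | hj
          · subst hj
            rw [if_pos rfl, if_pos rfl]
            ring
          · rw [if_neg hj, if_neg hj]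
            ring
        simp only [hθc, Finset.sum_congr rfl (fun j' _ => hterm j'), Finset.sum_add_distrib,
          Finset.sum_ite_eq' Finset.univ j, Finset.mem_univ, if_true]
        ring
      have hineq := hmin θc hθcmono
      have expand : ∑ i, (y i - θc (x i)) ^ 2
          = ∑ i, (y i - θs (x i)) ^ 2 - 2 * c * B + c ^ 2 * N := by
        simp only [hθcval]
        rw [hB, hN, Finset.mul_sum, Finset.mul_sum, ← Finset.sum_sub_distrib,
          ← Finset.sum_add_distrib]
        apply Finset.sum_congr rfl
        intro i _
        have hI : (if u j ≤ x i then (1 : ℝ) else 0) * (if u j ≤ x i then (1 : ℝ) else 0)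
            = (if u j ≤ x i then (1 : ℝ) else 0) := by
          split_ifs <;> norm_num
        nlinarith [hI]
      have hB0 : 2 * c * B ≤ c ^ 2 * N := by linarith
      exact hB0
    have hB0 : B = 0 := quad_zero N B (a j) (ha j) hN0 key
    have hneg : ∑ i, (if u j ≤ x i then (1 : ℝ) else 0) * (θs (x i) - y i) = -B := by
      rw [hB, ← Finset.sum_neg_distrib]
      exact Finset.sum_congr rfl (fun i _ => by ring)
    rw [hneg, hB0, neg_zero]
  -- Step C: combinatorial structure of the level sets
  set K : Fin n → Finset (Fin J) := fun i => Finset.univ.filter (fun j => u j ≤ x i) with hK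
  have hKlower : ∀ i : Fin n, ∀ ⦃j j' : Fin J⦄, j ≤ j' → j' ∈ K i → j ∈ K i := by
    intro i j j' hle hj'
    simp only [hK, Finset.mem_filter, Finset.mem_univ, true_and] at *
    exact le_trans (hu.monotone hle) hj'
  set k : Fin n → ℕ := fun i => (K i).card with hk
  have hmem : ∀ (i : Fin n) (j : Fin J), u j ≤ x i ↔ (j : ℕ) < k i := by
    intro i j
    rw [hk, ← mem_iff_lt_card (K i) (hKlower i) j]
    simp [hK]
  have hkJ : ∀ i, k i ≤ J := by
    intro i
    simpa using Finset.card_filter_le Finset.univ (fun j : Fin J => u j ≤ x i)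
  set V : ℕ → ℝ := fun m => a₀ + ∑ j : Fin J, (if (j : ℕ) < m then a j else 0) with hV
  have hθV : ∀ i, θs (x i) = V (k i) := by
    intro i
    rw [hform, hV]
    congr 1
    apply Finset.sum_congr rfl
    intro j _
    by_cases h : u j ≤ x i
    · simp [h, (hmem i j).mp h]
    · have h2 : ¬ (j : ℕ) < k i := fun hlt => h ((hmem i j).mpr hlt)
      simp [h, h2]
  have htel : ∀ i, r (V (k i)) - r (V 0)
      = ∑ j : Fin J, (r (V ((j : ℕ) + 1)) - r (V (j : ℕ))) *
          (if u j ≤ x i then (1 : ℝ) else 0) := by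
    intro i
    have h1 : ∀ j : Fin J, (r (V ((j : ℕ) + 1)) - r (V (j : ℕ))) *
          (if u j ≤ x i then (1 : ℝ) else 0)
        = if (j : ℕ) < k i then r (V ((j : ℕ) + 1)) - r (V (j : ℕ)) else 0 := by
      intro j
      by_cases h : u j ≤ x i
      · simp [h, (hmem i j).mp h]
      · have h2 : ¬ (j : ℕ) < k i := fun hlt => h ((hmem i j).mpr hlt)
        simp [h, h2]
    rw [Finset.sum_congr rfl (fun j _ => h1 j)]
    rw [Fin.sum_univ_eq_sum_range (fun m => if m < k i then r (V (m + 1)) - r (V m) else 0) J]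
    have hfil : ∑ m ∈ Finset.range J, (if m < k i then r (V (m + 1)) - r (V m) else 0)
        = ∑ m ∈ Finset.range (k i), (r (V (m + 1)) - r (V m)) := by
      rw [← Finset.sum_filter]
      apply Finset.sum_congr _ (fun m _ => rfl)
      ext m
      simp only [Finset.mem_filter, Finset.mem_range]
      have := hkJ i
      omega
    rw [hfil, Finset.sum_range_sub (fun m => r (V m))]
  -- Final assembly
  calc ∑ i, r (θs (x i)) * (θs (x i) - y i)
      = ∑ i, (r (V 0) + (r (V (k i)) - r (V 0))) * (θs (x i) - y i) := by
        apply Finset.sum_congr rfl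
        intro i _
        rw [hθV i]
        ring
    _ = r (V 0) * (∑ i, (θs (x i) - y i))
        + ∑ j : Fin J, (r (V ((j : ℕ) + 1)) - r (V (j : ℕ))) *
            (∑ i, (if u j ≤ x i then (1 : ℝ) else 0) * (θs (x i) - y i)) := by
        simp only [htel, add_mul, Finset.sum_add_distrib, Finset.mul_sum]
        congr 1
        have hsw : ∀ i : Fin n,
            (∑ j : Fin J, (r (V ((j : ℕ) + 1)) - r (V (j : ℕ))) *
              (if u j ≤ x i then (1 : ℝ) else 0)) * (θs (x i) - y i)
            = ∑ j : Fin J, (r (V ((j : ℕ) + 1)) - r (V (j : ℕ))) *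
              ((if u j ≤ x i then (1 : ℝ) else 0) * (θs (x i) - y i)) := by
          intro i
          rw [Finset.sum_mul]
          exact Finset.sum_congr rfl (fun j _ => by ring)
        rw [Finset.sum_congr rfl (fun i _ => hsw i), Finset.sum_comm]
    _ = 0 := by
        rw [hstepA]
        simp only [hstepB, mul_zero, Finset.sum_const_zero]
        ring
end

section
/- Key deterministic inequality in the proof of Theorem 3: Let P be a probability measure on a measurable space 𝒪, let w : 𝒪 → 𝒲 be measurable, let g, g₀, τ₀ : 𝒲 → ℝ be bounded measurable, and let χ₀, χₘ : 𝒪 → ℝ be bounded measurable with P[χ₀ | σ(w)] = τ₀∘w P-almost surely. Let o₁, …, o_ℓ ∈ 𝒪 and write P_ℓ h := ℓ^{-1} Σ_{i=1}^{ℓ} h(oᵢ) for the empirical average and P h := ∫ h dP. Assume: (i) the empirical score inequality Σ_{i=1}^{ℓ} (g₀(w(oᵢ)) − g(w(oᵢ)))·(χₘ(oᵢ) − g(w(oᵢ))) ≤ 0, and (ii) the population projection inequality ∫ (g(w(o)) − g₀(w(o)))·(τ₀(w(o)) − g₀(w(o))) dP(o) ≤ 0. Then ∫ (g₀∘w − g∘w)²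 dP ≤ P[(g₀∘w − g∘w)·(χ₀ − χₘ)] + (P − P_ℓ)[(g₀∘w − g∘w)·(χₘ − χ₀)] + (P_ℓ − P)[(g₀∘w − g∘w)·(g∘w − χ₀)]. -/
open MeasureTheory

private lemma integrable_of_bdd' {𝒪 : Type*} [MeasurableSpace 𝒪] (P : Measure 𝒪)
    [IsFiniteMeasure P] {f : 𝒪 → ℝ} (hf : Measurable f) {C : ℝ} (h : ∀ x, |f x| ≤ C) :
    Integrable f P :=
  (integrable_const C).mono' hf.aestronglyMeasurable (Filter.Eventually.of_forall fun x => by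
    simpa using h x)

private lemma integrable_mul_of_bdd' {𝒪 : Type*} [MeasurableSpace 𝒪] (P : Measure 𝒪)
    [IsFiniteMeasure P] {f h : 𝒪 → ℝ} (hf : Measurable f) (hh : Measurable h)
    (hfb : ∃ C, ∀ x, |f x| ≤ C) (hhb : ∃ C, ∀ x, |h x| ≤ C) :
    Integrable (fun x => f x * h x) P := by
  obtain ⟨Cf, hCf⟩ := hfb; obtain ⟨Ch, hCh⟩ := hhb
  refine integrable_of_bdd' P (hf.mul hh) (C := max Cf 0 * max Ch 0) fun x => ?_
  rw [abs_mul]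
  exact mul_le_mul ((hCf x).trans (le_max_left Cf 0)) ((hCh x).trans (le_max_left Ch 0))
    (abs_nonneg _) (le_max_right Cf 0)

/-- **Key deterministic inequality in the proof of Theorem 3.**
With `Pℓ` the empirical average over calibration points `o₁,…,o_ℓ`, the empirical score
inequality (i) and the population projection inequality (ii) imply
`‖g₀∘w − g∘w‖²_{L²(P)} ≤ P[(g₀∘w − g∘w)(χ₀ − χₘ)]
  + (P − Pℓ)[(g₀∘w − g∘w)(χₘ − χ₀)] + (Pℓ − P)[(g₀∘w − g∘w)(g∘w − χ₀)]`. -/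
theorem key_deterministic_inequality_theorem3
    {𝒪 𝒲 : Type*} [MeasurableSpace 𝒪] [MeasurableSpace 𝒲]
    (P : Measure 𝒪) [IsProbabilityMeasure P]
    (w : 𝒪 → 𝒲) (hw : Measurable w)
    (g g₀ τ₀ : 𝒲 → ℝ)
    (hg : Measurable g) (hg₀ : Measurable g₀) (hτ₀ : Measurable τ₀)
    (hgbd : ∃ C, ∀ x, |g x| ≤ C) (hg₀bd : ∃ C, ∀ x, |g₀ x| ≤ C)
    (hτ₀bd : ∃ C, ∀ x, |τ₀ x| ≤ C)
    (χ₀ χₘ : 𝒪 → ℝ) (hχ₀ : Measurable χ₀) (hχₘ : Measurable χₘ)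
    (hχ₀bd : ∃ C, ∀ o, |χ₀ o| ≤ C) (hχₘbd : ∃ C, ∀ o, |χₘ o| ≤ C)
    (hχ₀ce : P[χ₀ | MeasurableSpace.comap w inferInstance]
        =ᵐ[P] fun o' => τ₀ (w o'))
    (ℓ : ℕ) (hℓ : 1 ≤ ℓ) (o : Fin ℓ → 𝒪)
    (hscore : ∑ i, (g₀ (w (o i)) - g (w (o i))) * (χₘ (o i) - g (w (o i))) ≤ 0)
    (hproj : ∫ o', (g (w o') - g₀ (w o')) * (τ₀ (w o') - g₀ (w o')) ∂P ≤ 0) :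
    ∫ o', (g₀ (w o') - g (w o')) ^ 2 ∂P
      ≤ (∫ o', (g₀ (w o') - g (w o')) * (χ₀ o' - χₘ o') ∂P)
        + ((∫ o', (g₀ (w o') - g (w o')) * (χₘ o' - χ₀ o') ∂P)
            - (ℓ : ℝ)⁻¹ * ∑ i, (g₀ (w (o i)) - g (w (o i))) * (χₘ (o i) - χ₀ (o i)))
        + (((ℓ : ℝ)⁻¹ * ∑ i, (g₀ (w (o i)) - g (w (o i))) * (g (w (o i)) - χ₀ (o i)))
            - ∫ o', (g₀ (w o') - g (w o')) * (g (w o') - χ₀ o') ∂P) := by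
  -- notation
  have hm : MeasurableSpace.comap w inferInstance ≤ ‹MeasurableSpace 𝒪› := hw.comap_le
  set D : 𝒪 → ℝ := fun o' => g₀ (w o') - g (w o') with hD_def
  have hDmeas : Measurable D := (hg₀.comp hw).sub (hg.comp hw)
  have hDbd : ∃ C, ∀ x, |D x| ≤ C := by
    obtain ⟨C₀, h₀⟩ := hg₀bd; obtain ⟨C₁, h₁⟩ := hgbd
    exact ⟨C₀ + C₁, fun x => (abs_sub _ _).trans (add_le_add (h₀ _) (h₁ _))⟩
  have hgw : Measurable (fun o' => g (w o')) := hg.comp hw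
  have hg₀w : Measurable (fun o' => g₀ (w o')) := hg₀.comp hw
  have hτ₀w : Measurable (fun o' => τ₀ (w o')) := hτ₀.comp hw
  have hgwbd : ∃ C, ∀ x, |g (w x)| ≤ C := hgbd.imp fun C h x => h _
  have hg₀wbd : ∃ C, ∀ x, |g₀ (w x)| ≤ C := hg₀bd.imp fun C h x => h _
  have hτ₀wbd : ∃ C, ∀ x, |τ₀ (w x)| ≤ C := hτ₀bd.imp fun C h x => h _
  -- integrability
  have iχ₀ : Integrable χ₀ P := by obtain ⟨C, h⟩ := hχ₀bd; exact integrable_of_bdd' P hχ₀ h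
  have iDχ₀ : Integrable (fun x => D x * χ₀ x) P :=
    integrable_mul_of_bdd' P hDmeas hχ₀ hDbd hχ₀bd
  have iDχₘ : Integrable (fun x => D x * χₘ x) P :=
    integrable_mul_of_bdd' P hDmeas hχₘ hDbd hχₘbd
  have iDg : Integrable (fun x => D x * g (w x)) P :=
    integrable_mul_of_bdd' P hDmeas hgw hDbd hgwbd
  have iDg₀ : Integrable (fun x => D x * g₀ (w x)) P :=
    integrable_mul_of_bdd' P hDmeas hg₀w hDbd hg₀wbd
  have iDτ₀ : Integrable (fun x => D x * τ₀ (w x)) P :=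
    integrable_mul_of_bdd' P hDmeas hτ₀w hDbd hτ₀wbd
  -- conditional expectation step: ∫ D χ₀ = ∫ D τ₀∘w
  have hwm : Measurable[MeasurableSpace.comap w inferInstance] w := comap_measurable w
  have hDm : StronglyMeasurable[MeasurableSpace.comap w inferInstance] D :=
    ((hg₀.comp hwm).sub (hg.comp hwm)).stronglyMeasurable
  have hce : ∫ x, D x * χ₀ x ∂P = ∫ x, D x * τ₀ (w x) ∂P := by
    have h1 : P[D * χ₀ | MeasurableSpace.comap w inferInstance]
        =ᵐ[P] D * P[χ₀ | MeasurableSpace.comap w inferInstance] :=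
      condExp_mul_of_stronglyMeasurable_left hDm (by exact iDχ₀) iχ₀
    have h2 : P[D * χ₀ | MeasurableSpace.comap w inferInstance]
        =ᵐ[P] fun x => D x * τ₀ (w x) := by
      filter_upwards [h1, hχ₀ce] with x hx1 hx2
      simp [hx1, Pi.mul_apply, hx2]
    calc ∫ x, D x * χ₀ x ∂P = ∫ x, (D * χ₀) x ∂P := rfl
      _ = ∫ x, (P[D * χ₀ | MeasurableSpace.comap w inferInstance]) x ∂P :=
          (integral_condExp hm).symm
      _ = ∫ x, D x * τ₀ (w x) ∂P := integral_congr_ae h2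
  -- projection: ∫ D g₀∘w ≤ ∫ D τ₀∘w
  have hprojD : ∫ x, D x * g₀ (w x) ∂P ≤ ∫ x, D x * τ₀ (w x) ∂P := by
    have heq : ∫ o', (g (w o') - g₀ (w o')) * (τ₀ (w o') - g₀ (w o')) ∂P
        = (∫ x, D x * g₀ (w x) ∂P) - ∫ x, D x * τ₀ (w x) ∂P := by
      rw [← integral_sub iDg₀ iDτ₀]
      exact integral_congr_ae (Filter.Eventually.of_forall fun x => by simp [hD_def]; ring)
    linarith [hproj, heq ▸ hproj]
  -- rewrite all integrals in terms of a,b,c,e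
  have e1 : ∫ o', (g₀ (w o') - g (w o')) ^ 2 ∂P
      = (∫ x, D x * g₀ (w x) ∂P) - ∫ x, D x * g (w x) ∂P := by
    rw [← integral_sub iDg₀ iDg]
    exact integral_congr_ae (Filter.Eventually.of_forall fun x => by simp [hD_def]; ring)
  have e2 : ∫ o', (g₀ (w o') - g (w o')) * (χ₀ o' - χₘ o') ∂P
      = (∫ x, D x * χ₀ x ∂P) - ∫ x, D x * χₘ x ∂P := by
    rw [← integral_sub iDχ₀ iDχₘ]
    exact integral_congr_ae (Filter.Eventually.of_forall fun x => by simp [hD_def]; ring)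
  have e3 : ∫ o', (g₀ (w o') - g (w o')) * (χₘ o' - χ₀ o') ∂P
      = (∫ x, D x * χₘ x ∂P) - ∫ x, D x * χ₀ x ∂P := by
    rw [← integral_sub iDχₘ iDχ₀]
    exact integral_congr_ae (Filter.Eventually.of_forall fun x => by simp [hD_def]; ring)
  have e4 : ∫ o', (g₀ (w o') - g (w o')) * (g (w o') - χ₀ o') ∂P
      = (∫ x, D x * g (w x) ∂P) - ∫ x, D x * χ₀ x ∂P := by
    rw [← integral_sub iDg iDχ₀]
    exact integral_congr_ae (Filter.Eventually.of_forall fun x => by simp [hD_def]; ring)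
  -- empirical part
  have hℓpos : (0:ℝ) < (ℓ:ℝ)⁻¹ := by positivity
  have hsum : (∑ i, (g₀ (w (o i)) - g (w (o i))) * (g (w (o i)) - χ₀ (o i)))
      - ∑ i, (g₀ (w (o i)) - g (w (o i))) * (χₘ (o i) - χ₀ (o i)) ≥ 0 := by
    have : (∑ i, (g₀ (w (o i)) - g (w (o i))) * (g (w (o i)) - χ₀ (o i)))
        - ∑ i, (g₀ (w (o i)) - g (w (o i))) * (χₘ (o i) - χ₀ (o i))
        = - ∑ i, (g₀ (w (o i)) - g (w (o i))) * (χₘ (o i) - g (w (o i))) := by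
      rw [← Finset.sum_sub_distrib, ← Finset.sum_neg_distrib]
      exact Finset.sum_congr rfl fun i _ => by ring
    rw [this]; linarith
  have hemp : 0 ≤ (ℓ : ℝ)⁻¹ * (∑ i, (g₀ (w (o i)) - g (w (o i))) * (g (w (o i)) - χ₀ (o i))
      - ∑ i, (g₀ (w (o i)) - g (w (o i))) * (χₘ (o i) - χ₀ (o i))) :=
    mul_nonneg hℓpos.le hsum
  rw [e1, e2, e3, e4]
  rw [mul_sub] at hemp
  linarith [hce ▸ hprojD]
end

section
/- Total-variation bound for binned averages of a bounded-variation function (abstract form of Lemma 3): Let θ₀ : ℝ → ℝ have finite total variation V (the supremum over all finite partitions x₀ < x₁ < … < x_N of Σ |θ₀(x_j) − θ₀(x_{j−1})|). Let ν be a measure on ℝ, let J ≥ 2, and let B₁, …, B_J ⊆ ℝ be measurable sets with 0 < ν(B_j) < ∞ for each j, ordered in the sense that x ≤ y for every x ∈ B_j and y ∈ B_{j+1}, for all j. Define the binned averages g_j := (ν(B_j))⁻¹ · ∫_{B_j} θ₀ dν. Then Σ_{j=1}^{J−1} |g_{j+1} − g_j| ≤ 3V. -/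
open MeasureTheory

private lemma avg_le_const {ν : Measure ℝ} {B : Set ℝ} (hm : MeasurableSet B)
    (h0 : 0 < (ν B).toReal) (ht : ν B < ⊤) {f : ℝ → ℝ} (hf : IntegrableOn f B ν)
    {c : ℝ} (hc : ∀ x ∈ B, f x ≤ c) :
    (ν B).toReal⁻¹ * ∫ x in B, f x ∂ν ≤ c := by
  have h1 : ∫ x in B, f x ∂ν ≤ ∫ _ in B, c ∂ν :=
    setIntegral_mono_on hf (integrableOn_const ht.ne) hm hc
  rw [setIntegral_const, smul_eq_mul] at h1
  calc (ν B).toReal⁻¹ * ∫ x in B, f x ∂ν ≤ (ν B).toReal⁻¹ * ((ν B).toReal * c) := by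
        exact mul_le_mul_of_nonneg_left h1 (inv_nonneg.2 h0.le)
    _ = c := by rw [← mul_assoc, inv_mul_cancel₀ h0.ne', one_mul]

private lemma const_le_avg {ν : Measure ℝ} {B : Set ℝ} (hm : MeasurableSet B)
    (h0 : 0 < (ν B).toReal) (ht : ν B < ⊤) {f : ℝ → ℝ} (hf : IntegrableOn f B ν)
    {c : ℝ} (hc : ∀ x ∈ B, c ≤ f x) :
    c ≤ (ν B).toReal⁻¹ * ∫ x in B, f x ∂ν := by
  have := avg_le_const (f := fun x => -f x) (c := -c) hm h0 ht hf.neg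
    (fun x hx => neg_le_neg (hc x hx))
  rw [integral_neg] at this
  nlinarith [this]

private lemma sum_abs_avg_le (ν : Measure ℝ) (J : ℕ) (hJ : 2 ≤ J) (B : ℕ → Set ℝ)
    (hBmeas : ∀ j < J, MeasurableSet (B j))
    (hB0 : ∀ j < J, 0 < (ν (B j)).toReal) (hBTop : ∀ j < J, ν (B j) < ⊤)
    (hord : ∀ j, j + 1 < J → ∀ x ∈ B j, ∀ y ∈ B (j + 1), x ≤ y)
    (f : ℝ → ℝ) (hf : Monotone f)
    (hint : ∀ j < J, IntegrableOn f (B j) ν)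
    (K : ℝ) (hK : ∀ x y : ℝ, f y - f x ≤ K) :
    ∑ j ∈ Finset.range (J - 1),
      |(ν (B (j+1))).toReal⁻¹ * ∫ x in B (j+1), f x ∂ν
        - (ν (B j)).toReal⁻¹ * ∫ x in B j, f x ∂ν| ≤ K := by
  set G : ℕ → ℝ := fun j => (ν (B j)).toReal⁻¹ * ∫ x in B j, f x ∂ν with hG
  have hstep : ∀ j, j + 1 < J → G j ≤ G (j + 1) := by
    intro j hj
    have hj' : j < J := by omega
    have h1 : ∀ y ∈ B (j+1), G j ≤ f y := fun y hy =>
      avg_le_const (hBmeas j hj') (hB0 j hj') (hBTop j hj') (hint j hj')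
        (fun x hx => hf (hord j hj x hx y hy))
    exact const_le_avg (hBmeas _ hj) (hB0 _ hj) (hBTop _ hj) (hint _ hj) h1
  have habs : ∀ j ∈ Finset.range (J - 1), |G (j+1) - G j| = G (j+1) - G j := by
    intro j hj
    rw [Finset.mem_range] at hj
    exact abs_of_nonneg (sub_nonneg.2 (hstep j (by omega)))
  rw [Finset.sum_congr rfl habs, Finset.sum_range_sub]
  -- bound G (J-1) - G 0 ≤ K
  have h0J : 0 < J := by omega
  have hJ1 : J - 1 < J := by omega
  have hub : ∀ y : ℝ, f y ≤ G 0 + K := by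
    intro y
    have : f y - K ≤ G 0 :=
      const_le_avg (hBmeas 0 h0J) (hB0 0 h0J) (hBTop 0 h0J) (hint 0 h0J)
        (fun x _ => by linarith [hK x y])
    linarith
  have : G (J-1) ≤ G 0 + K :=
    avg_le_const (hBmeas _ hJ1) (hB0 _ hJ1) (hBTop _ hJ1) (hint _ hJ1)
      (fun y _ => hub y)
  linarith

/-- **Total-variation bound for binned averages of a bounded-variation function
(abstract form of Lemma 3).**
If `θ₀ : ℝ → ℝ` has finite total variation `V`, and `B 0, …, B (J-1)` are measurable
sets of finite positive `ν`-measure ordered so that every point of `B j` lies below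
every point of `B (j+1)`, then the binned averages
`g j := ν(B j)⁻¹ ∫_{B j} θ₀ dν` satisfy `Σ_{j=0}^{J-2} |g (j+1) − g j| ≤ 3V`. -/
theorem total_variation_bound_binned_averages
    (θ₀ : ℝ → ℝ) (V : ℝ) (hV0 : 0 ≤ V)
    (hV : eVariationOn θ₀ Set.univ = ENNReal.ofReal V)
    (ν : Measure ℝ) (J : ℕ) (hJ : 2 ≤ J)
    (B : ℕ → Set ℝ)
    (hBmeas : ∀ j < J, MeasurableSet (B j))
    (hB0 : ∀ j < J, 0 < ν (B j)) (hBTop : ∀ j < J, ν (B j) < ⊤)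
    (hord : ∀ j, j + 1 < J → ∀ x ∈ B j, ∀ y ∈ B (j + 1), x ≤ y) :
    ∑ j ∈ Finset.range (J - 1),
        |(ν (B (j + 1))).toReal⁻¹ * (∫ x in B (j + 1), θ₀ x ∂ν)
          - (ν (B j)).toReal⁻¹ * (∫ x in B j, θ₀ x ∂ν)| ≤ 3 * V := by
  have hfin : eVariationOn θ₀ Set.univ ≠ ⊤ := by rw [hV]; exact ENNReal.ofReal_ne_top
  have hbv : BoundedVariationOn θ₀ Set.univ := hfin
  have hlbv : LocallyBoundedVariationOn θ₀ Set.univ :=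
    fun a b _ _ => hbv.mono (Set.inter_subset_left)
  set p : ℝ → ℝ := fun x => variationOnFromTo θ₀ Set.univ 0 x with hp
  set q : ℝ → ℝ := fun x => p x - θ₀ x with hq
  have hpmono : Monotone p := by
    rw [← monotoneOn_univ]
    exact variationOnFromTo.monotoneOn hlbv (Set.mem_univ 0)
  have hqmono : Monotone q := by
    rw [← monotoneOn_univ]
    exact variationOnFromTo.sub_self_monotoneOn hlbv (Set.mem_univ 0)
  -- variation-type bounds
  have hvar_le : ∀ x y : ℝ, x ≤ y →
      (eVariationOn θ₀ (Set.univ ∩ Set.Icc x y)).toReal ≤ V := by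
    intro x y _
    have h1 : eVariationOn θ₀ (Set.univ ∩ Set.Icc x y) ≤ eVariationOn θ₀ Set.univ :=
      eVariationOn.mono θ₀ (Set.inter_subset_left)
    have := ENNReal.toReal_mono hfin h1
    rwa [hV, ENNReal.toReal_ofReal hV0] at this
  have hpK : ∀ x y : ℝ, p y - p x ≤ V := by
    intro x y
    rcases le_total x y with h | h
    · have hadd := variationOnFromTo.add hlbv (Set.mem_univ 0) (Set.mem_univ x) (Set.mem_univ y)
      have : p y - p x = variationOnFromTo θ₀ Set.univ x y := by
        simp only [hp]; linarith [hadd]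
      rw [this, variationOnFromTo.eq_of_le θ₀ Set.univ h]
      exact hvar_le x y h
    · have := hpmono h
      linarith
  have hθdiff : ∀ x y : ℝ, |θ₀ y - θ₀ x| ≤ V := by
    intro x y
    have h1 : edist (θ₀ x) (θ₀ y) ≤ eVariationOn θ₀ Set.univ :=
      eVariationOn.edist_le θ₀ (Set.mem_univ x) (Set.mem_univ y)
    have h2 := ENNReal.toReal_mono hfin h1
    rw [hV, ENNReal.toReal_ofReal hV0, edist_dist, ENNReal.toReal_ofReal dist_nonneg] at h2
    rw [abs_sub_comm]
    simpa [Real.dist_eq] using h2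
  have hqK : ∀ x y : ℝ, q y - q x ≤ 2 * V := by
    intro x y
    have h1 := hpK x y
    have h2 := abs_le.1 (hθdiff x y)
    simp only [hq]
    rcases le_total x y with h | h
    · linarith [h2.1]
    · have := hqmono h; linarith
  -- boundedness and integrability
  have hpbd : ∀ x : ℝ, |p x| ≤ V := by
    intro x
    have h0 : p 0 = 0 := variationOnFromTo.self θ₀ Set.univ 0
    have h1 := hpK 0 x
    have h2 := hpK x 0
    rw [abs_le]; constructor <;> linarith
  have hθbd : ∀ x : ℝ, |θ₀ x| ≤ |θ₀ 0| + V := by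
    intro x
    have := abs_le.1 (hθdiff 0 x)
    rw [abs_le]; cases abs_le.1 (le_refl |θ₀ 0|) with
    | intro ha hb => constructor <;> [linarith [this.1, neg_abs_le (θ₀ 0)];
        linarith [this.2, le_abs_self (θ₀ 0)]]
  have hqbd : ∀ x : ℝ, |q x| ≤ V + (|θ₀ 0| + V) := by
    intro x
    simp only [hq]
    calc |p x - θ₀ x| ≤ |p x| + |θ₀ x| := abs_sub _ _
      _ ≤ V + (|θ₀ 0| + V) := add_le_add (hpbd x) (hθbd x)
  have hB0' : ∀ j < J, 0 < (ν (B j)).toReal := fun j hj =>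
    ENNReal.toReal_pos (hB0 j hj).ne' (hBTop j hj).ne
  have hInt : ∀ (f : ℝ → ℝ), Measurable f → (∀ C : ℝ, True) → ∀ (C : ℝ),
      (∀ x, |f x| ≤ C) → ∀ j < J, IntegrableOn f (B j) ν := by
    intro f hfm _ C hC j hj
    have hconst : IntegrableOn (fun _ : ℝ => C) (B j) ν :=
      integrableOn_const (hBTop j hj).ne
    exact Integrable.mono' hconst (hfm.aestronglyMeasurable)
      (Filter.Eventually.of_forall fun x => by simpa [Real.norm_eq_abs] using hC x)
  have hpm : Measurable p := hpmono.measurable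
  have hqm : Measurable q := hqmono.measurable
  have hθm : Measurable θ₀ := by
    have : θ₀ = fun x => p x - q x := by funext x; simp [hq]
    rw [this]; exact hpm.sub hqm
  have hIntp : ∀ j < J, IntegrableOn p (B j) ν := hInt p hpm (fun _ => trivial) V hpbd
  have hIntq : ∀ j < J, IntegrableOn q (B j) ν :=
    hInt q hqm (fun _ => trivial) (V + (|θ₀ 0| + V)) hqbd
  have hIntθ : ∀ j < J, IntegrableOn θ₀ (B j) ν :=
    hInt θ₀ hθm (fun _ => trivial) (|θ₀ 0| + V) hθbd
  -- decompose averages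
  have hGsplit : ∀ j < J, (ν (B j)).toReal⁻¹ * (∫ x in B j, θ₀ x ∂ν)
      = (ν (B j)).toReal⁻¹ * (∫ x in B j, p x ∂ν)
        - (ν (B j)).toReal⁻¹ * (∫ x in B j, q x ∂ν) := by
    intro j hj
    have : ∫ x in B j, θ₀ x ∂ν = (∫ x in B j, p x ∂ν) - ∫ x in B j, q x ∂ν := by
      rw [← integral_sub (hIntp j hj) (hIntq j hj)]
      congr 1; funext x; simp [hq]
    rw [this, mul_sub]
  have hsump := sum_abs_avg_le ν J hJ B hBmeas hB0' hBTop hord p hpmono hIntp V hpK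
  have hsumq := sum_abs_avg_le ν J hJ B hBmeas hB0' hBTop hord q hqmono hIntq (2*V) hqK
  calc ∑ j ∈ Finset.range (J - 1),
        |(ν (B (j + 1))).toReal⁻¹ * (∫ x in B (j + 1), θ₀ x ∂ν)
          - (ν (B j)).toReal⁻¹ * (∫ x in B j, θ₀ x ∂ν)|
      ≤ ∑ j ∈ Finset.range (J - 1),
        (|(ν (B (j+1))).toReal⁻¹ * ∫ x in B (j+1), p x ∂ν
            - (ν (B j)).toReal⁻¹ * ∫ x in B j, p x ∂ν|
          + |(ν (B (j+1))).toReal⁻¹ * ∫ x in B (j+1), q x ∂ν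
            - (ν (B j)).toReal⁻¹ * ∫ x in B j, q x ∂ν|) := by
        apply Finset.sum_le_sum
        intro j hj
        rw [Finset.mem_range] at hj
        rw [hGsplit (j+1) (by omega), hGsplit j (by omega)]
        exact (abs_sub _ _).trans_eq' (by ring_nf)
    _ = _ + _ := Finset.sum_add_distrib
    _ ≤ V + 2 * V := add_le_add hsump hsumq
    _ = 3 * V := by ring
end
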